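/- Let q = p^m be a prime power and F_q a finite field with q elements, and let σ be any transposition in the symmetric group on {1,2,3}. Then Σ_{t ∈ (F_q^×)^3} |Fix_3(σ,t)| equals q^3(q−1)^3 if p = 2, and q(q−1)^4(q+1) if p ≠ 2. -/

import Mathlib

open Matrix

/-- The set of fixed points of `(σ, t)` in `GL n F` under the action
`(σ,t)·A = D_t⁻¹ P_σ⁻¹ A P_σ D_t²`, i.e. the invertible matrices `A` with
`t_i A_{ij} = A_{σ(i)σ(j)} t_j²` for all `i, j`. -/
def fixSet (F : Type*) [Field F] (n : ℕ) (σ : Equiv.Perm (Fin n)) (t : Fin n → Fˣ) :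
    Set (GL (Fin n) F) :=
  {A | ∀ i j, (t i : F) * (A : Matrix (Fin n) (Fin n) F) i j
        = (A : Matrix (Fin n) (Fin n) F) (σ i) (σ j) * (t j : F) ^ 2}

/-!
An invertible matrix `A` fixed by `(σ, t)` conjugates `P D_t` into `P D_t²`, where `P` is the
permutation matrix of `σ⁻¹`. Comparing determinants gives `∏ tᵢ = 1`, comparing traces gives
`∑_{σ i = i} tᵢ = ∑_{σ i = i} tᵢ²`. For the transposition `(0 1)` of `{0, 1, 2}` (every
transposition is conjugate to it, and conjugate elements have equinumerous fixed sets) this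
forces `t = (T, T⁻¹, 1)`, and conjugating by the diagonal element `(1, (1, T, 1))` identifies
`Fix(σ, t)` with `Fix(σ, 1)`, the centraliser of `P` in `GL₃`. Its elements are the matrices
`!![a, c, f; c, a, f; d, d, e]` with `(a - c) (e (a + c) - 2 f d) ≠ 0`: in odd characteristic
this is `GL₁ × GL₂`, of order `(q - 1)²(q² - 1)q`, and in characteristic `2` the determinant is
`(a + c)² e`, leaving `(q - 1)² q³` matrices. There are `q - 1` admissible `t`.
-/

open Equiv

section General

variable {F : Type*} [Field F] {n : ℕ}

theorem semiconjBy_of_mem_fixSet {σ : Perm (Fin n)} {t : Fin n → Fˣ} {A : GL (Fin n) F}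
    (hA : A ∈ fixSet F n σ t) :
    SemiconjBy (A : Matrix (Fin n) (Fin n) F)
      ((σ⁻¹).permMatrix F * diagonal fun i => (t i : F) ^ 2)
      ((σ⁻¹).permMatrix F * diagonal fun i => (t i : F)) := by
  rw [SemiconjBy, ← Matrix.mul_assoc, Matrix.mul_assoc _ _ (A : Matrix (Fin n) (Fin n) F)]
  ext i j
  simpa [Perm.permMatrix, PEquiv.toMatrix_toPEquiv_mul, PEquiv.mul_toMatrix_toPEquiv,
    mul_diagonal, diagonal_mul, Perm.inv_def] using (hA (σ⁻¹ i) j).symm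

theorem prod_eq_one_of_mem_fixSet {σ : Perm (Fin n)} {t : Fin n → Fˣ} {A : GL (Fin n) F}
    (hA : A ∈ fixSet F n σ t) : ∏ i, (t i : F) = 1 := by
  have hdet := congrArg det (semiconjBy_of_mem_fixSet hA).eq
  simp only [det_mul, det_diagonal, Finset.prod_pow, det_permutation] at hdet
  have hsign : ((Perm.sign σ⁻¹ : ℤ) : F) ≠ 0 := by
    rcases Int.units_eq_one_or (Perm.sign σ⁻¹) with h | h <;> simp [h]
  have hprod : ∏ i, (t i : F) ≠ 0 := Finset.prod_ne_zero_iff.2 fun i _ => (t i).ne_zero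
  refine mul_right_cancel₀ hprod (mul_left_cancel₀ (mul_ne_zero A.det_ne_zero hsign) ?_)
  linear_combination hdet

theorem sum_fixedPoints_eq_of_mem_fixSet {σ : Perm (Fin n)} {t : Fin n → Fˣ}
    {A : GL (Fin n) F} (hA : A ∈ fixSet F n σ t) :
    ∑ i with σ i = i, (t i : F) = ∑ i with σ i = i, (t i : F) ^ 2 := by
  have trace_eq (d : Fin n → F) :
      trace ((σ⁻¹).permMatrix F * diagonal d) = ∑ i with σ i = i, d i := by
    simp only [trace, Perm.permMatrix, PEquiv.toMatrix_toPEquiv_mul, Finset.sum_filter]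
    refine Fintype.sum_congr _ _ fun i => ?_
    have hfix : σ.symm i = i ↔ σ i = i := σ.symm_apply_eq.trans eq_comm
    by_cases h : σ i = i
    · simp [Perm.inv_def, hfix.2 h, h]
    · simp [Perm.inv_def, hfix, h]
  rw [← trace_eq, ← trace_eq,
    (Units.eq_mul_inv_iff_mul_eq A).2 (semiconjBy_of_mem_fixSet hA).eq.symm, trace_units_conj]

theorem card_fixSet_conj (σ c : Perm (Fin n)) (t : Fin n → Fˣ) :
    Nat.card (fixSet F n (c * σ * c⁻¹) (t ∘ ⇑c⁻¹)) = Nat.card (fixSet F n σ t) := by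
  refine (Nat.card_congr (subtypeEquiv (Units.mapEquiv (reindexAlgEquiv F F c).toMulEquiv)
    fun A => ⟨fun hA i j => ?_, fun hA i j => ?_⟩)).symm
  · simpa [Perm.inv_def] using hA (c.symm i) (c.symm j)
  · simpa [Perm.inv_def] using hA (c i) (c j)

theorem sum_card_fixSet_eq_of_isConj [Fintype F] [DecidableEq F] {σ τ : Perm (Fin n)}
    (h : IsConj σ τ) :
    ∑ t : Fin n → Fˣ, Nat.card (fixSet F n σ t) =
      ∑ t : Fin n → Fˣ, Nat.card (fixSet F n τ t) := by
  obtain ⟨c, rfl⟩ := isConj_iff.1 h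
  exact Fintype.sum_equiv (c.arrowCongr (Equiv.refl _)) _ _ fun t => (card_fixSet_conj σ c t).symm

-- `A ↦ D_x⁻¹ A D_x²` is the action of `(1, x)`, which conjugates `(σ, x ∘ σ / x)` to `(σ, 1)`.
theorem card_fixSet_coboundary (σ : Perm (Fin n)) (x : Fin n → Fˣ) :
    Nat.card (fixSet F n σ fun i => x (σ i) / x i) = Nat.card (fixSet F n σ 1) := by
  let X : GL (Fin n) F :=
    ⟨diagonal fun i => (x i : F), diagonal fun i => ((x i)⁻¹ : Fˣ), by simp, by simp⟩
  refine Nat.card_congr (subtypeEquiv ((Equiv.mulLeft X⁻¹).trans (Equiv.mulRight (X * X)))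
    fun A => forall₂_congr fun i j => ?_)
  simp only [Units.val_div_eq_div_val, Pi.one_apply, Units.val_one, Units.val_inv_eq_inv_val,
    Units.inv_mk, mulRight_mul, trans_apply, coe_mulLeft, Perm.coe_mul, coe_mulRight,
    Function.comp_apply, Units.val_mul, mul_diagonal, diagonal_mul, one_mul, one_pow, mul_one, X]
  field_simp

theorem mem_fixSet_one_iff {σ : Perm (Fin n)} {A : GL (Fin n) F} :
    A ∈ fixSet F n σ 1 ↔ ∀ i j, (A : Matrix (Fin n) (Fin n) F) (σ i) (σ j) = A i j := by
  simp [fixSet, eq_comm]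

end General

section Transposition

variable {F : Type*} [Field F]

theorem mul_eq_one_and_eq_one_of_mem_fixSet_swap {t : Fin 3 → Fˣ} {A : GL (Fin 3) F}
    (hA : A ∈ fixSet F 3 (swap 0 1) t) : t 0 * t 1 = 1 ∧ t 2 = 1 := by
  have hprod := prod_eq_one_of_mem_fixSet hA
  have htrace := sum_fixedPoints_eq_of_mem_fixSet hA
  rw [show (Finset.univ.filter fun i : Fin 3 => swap 0 1 i = i) = {2} by decide,
    Finset.sum_singleton, Finset.sum_singleton] at htrace
  rw [Fin.prod_univ_three] at hprod
  have h2 : (t 2 : F) = 1 := mul_left_cancel₀ (t 2).ne_zero (by linear_combination -htrace)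
  refine ⟨Units.ext ?_, Units.ext h2⟩
  push_cast
  linear_combination hprod - (t 0 * t 1 : F) * h2

theorem card_fixSet_swap [DecidableEq F] (t : Fin 3 → Fˣ) :
    Nat.card (fixSet F 3 (swap 0 1) t) =
      if t 0 * t 1 = 1 ∧ t 2 = 1 then Nat.card (fixSet F 3 (swap 0 1) 1) else 0 := by
  split_ifs with ht
  · have hcob : t = fun i => ![1, t 0, 1] (swap 0 1 i) / ![1, t 0, 1] i := by
      funext i
      fin_cases i <;> simp [ht.2, eq_inv_of_mul_eq_one_right ht.1, swap_apply_of_ne_of_ne]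
    rw [hcob, card_fixSet_coboundary]
  · rw [Nat.card_eq_zero]
    exact .inl ⟨fun A => ht (mul_eq_one_and_eq_one_of_mem_fixSet_swap A.2)⟩

theorem card_filter_mul_eq_one_and_eq_one [Fintype F] [DecidableEq F] :
    (Finset.univ.filter fun t : Fin 3 → Fˣ => t 0 * t 1 = 1 ∧ t 2 = 1).card =
      Fintype.card F - 1 := by
  rw [← Fintype.card_units, ← Fintype.card_subtype]
  refine Fintype.card_congr
    { toFun t := t.1 0
      invFun T := ⟨![T, T⁻¹, 1], by simp⟩
      left_inv t := ?_
      right_inv T := rfl }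
  obtain ⟨t, h01, h2⟩ := t
  ext i
  fin_cases i <;> simp [h2, eq_inv_of_mul_eq_one_right h01]

theorem sum_card_fixSet_swap [Fintype F] [DecidableEq F] :
    ∑ t : Fin 3 → Fˣ, Nat.card (fixSet F 3 (swap 0 1) t) =
      (Fintype.card F - 1) * Nat.card (fixSet F 3 (swap 0 1) 1) := by
  rw [Fintype.sum_congr _ _ card_fixSet_swap, Finset.sum_ite, Finset.sum_const_zero, add_zero,
    Finset.sum_const, smul_eq_mul, card_filter_mul_eq_one_and_eq_one]

def commSwapMatrix {α : Type*} (a c f d e : α) : Matrix (Fin 3) (Fin 3) α :=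
  !![a, c, f; c, a, f; d, d, e]

theorem det_commSwapMatrix {R : Type*} [CommRing R] (a c f d e : R) :
    (commSwapMatrix a c f d e).det = (a - c) * (e * (a + c) - 2 * f * d) := by
  simp only [commSwapMatrix, det_fin_three, of_apply, cons_val', cons_val_zero, cons_val_one,
    cons_val, cons_val_fin_one]
  ring

theorem commSwapMatrix_swap_apply {α : Type*} (a c f d e : α) (i j : Fin 3) :
    commSwapMatrix a c f d e (swap 0 1 i) (swap 0 1 j) = commSwapMatrix a c f d e i j := by
  fin_cases i <;> fin_cases j <;> rfl

theorem commSwapMatrix_mem_fixSet {a c f d e : F} (h : (commSwapMatrix a c f d e).det ≠ 0) :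
    GeneralLinearGroup.mkOfDetNeZero _ h ∈ fixSet F 3 (swap 0 1) 1 :=
  mem_fixSet_one_iff.2 (commSwapMatrix_swap_apply a c f d e)

theorem eq_commSwapMatrix_of_mem {A : GL (Fin 3) F} (hA : A ∈ fixSet F 3 (swap 0 1) 1) :
    (A : Matrix (Fin 3) (Fin 3) F) =
      commSwapMatrix (A 0 0) (A 0 1) (A 0 2) (A 2 0) (A 2 2) := by
  rw [mem_fixSet_one_iff] at hA
  ext i j
  fin_cases i <;> fin_cases j
  all_goals first | rfl | exact (hA _ _).symm

-- In the basis `e₀ + e₁, e₀ - e₁, e₂` a matrix commuting with `(0 1)` is block diagonal.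
noncomputable def fixSetSwapEquivOfTwoNeZero (h2 : (2 : F) ≠ 0) :
    fixSet F 3 (swap 0 1) 1 ≃ Fˣ × GL (Fin 2) F where
  toFun A :=
    have hdet : (A.1.1 0 0 - A.1.1 0 1) *
        (A.1.1 2 2 * (A.1.1 0 0 + A.1.1 0 1) - 2 * A.1.1 0 2 * A.1.1 2 0) ≠ 0 := by
      rw [← det_commSwapMatrix, ← eq_commSwapMatrix_of_mem A.2]
      exact A.1.det_ne_zero
    (Units.mk0 _ (left_ne_zero_of_mul hdet),
      GeneralLinearGroup.mkOfDetNeZero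
        !![A.1.1 0 0 + A.1.1 0 1, A.1.1 0 2; 2 * A.1.1 2 0, A.1.1 2 2]
        fun h => right_ne_zero_of_mul hdet (by rw [det_fin_two_of] at h; linear_combination h))
  invFun p :=
    have hdet : (commSwapMatrix ((p.2.1 0 0 + p.1) / 2) ((p.2.1 0 0 - p.1) / 2) (p.2.1 0 1)
        (p.2.1 1 0 / 2) (p.2.1 1 1)).det ≠ 0 := by
      have h := mul_ne_zero p.1.ne_zero p.2.det_ne_zero
      rw [det_fin_two] at h
      rw [det_commSwapMatrix]
      convert h using 1
      field_simp
      ring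
    ⟨_, commSwapMatrix_mem_fixSet hdet⟩
  left_inv A := by
    refine Subtype.ext (Units.ext ((eq_commSwapMatrix_of_mem A.2).trans ?_).symm)
    simp [commSwapMatrix, ← two_mul, h2]
  right_inv p := by
    refine Prod.ext (Units.ext ?_) (Units.ext ?_)
    · simp only [commSwapMatrix, GeneralLinearGroup.val_mkOfDetNeZero, Units.val_mk0, of_apply,
        cons_val', cons_val_zero, cons_val_one, cons_val_fin_one]
      field_simp
      ring
    · ext i j
      fin_cases i <;> fin_cases j <;>
        simp only [commSwapMatrix, GeneralLinearGroup.val_mkOfDetNeZero, of_apply, cons_val',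
          cons_val_zero, cons_val_one, cons_val, cons_val_fin_one, Fin.zero_eta, Fin.mk_one] <;>
        field_simp
      ring

-- In characteristic `2` the determinant `(a - c) (e (a + c) - 2 f d)` is `(a + c)² e`.
noncomputable def fixSetSwapEquivOfTwoEqZero (h2 : (2 : F) = 0) :
    fixSet F 3 (swap 0 1) 1 ≃ (Fˣ × Fˣ) × F × F × F where
  toFun A :=
    have hdet : (A.1.1 0 0 + A.1.1 0 1) * (A.1.1 2 2 * (A.1.1 0 0 + A.1.1 0 1)) ≠ 0 := by
      have h := A.1.det_ne_zero
      rw [eq_commSwapMatrix_of_mem A.2, det_commSwapMatrix] at h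
      convert h using 1
      linear_combination (A.1.1 0 1 * A.1.1 2 2 * (A.1.1 0 0 + A.1.1 0 1)
        + (A.1.1 0 0 - A.1.1 0 1) * A.1.1 0 2 * A.1.1 2 0) * h2
    ((Units.mk0 _ (left_ne_zero_of_mul hdet),
        Units.mk0 _ (left_ne_zero_of_mul (right_ne_zero_of_mul hdet))),
      A.1.1 0 1, A.1.1 0 2, A.1.1 2 0)
  invFun p :=
    have hdet : (commSwapMatrix (p.1.1 - p.2.1 : F) p.2.1 p.2.2.1 p.2.2.2 p.1.2).det ≠ 0 := by
      rw [det_commSwapMatrix]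
      have h := mul_ne_zero (mul_ne_zero p.1.1.ne_zero p.1.2.ne_zero) p.1.1.ne_zero
      convert h using 1
      linear_combination (-(p.2.1 * p.1.2 * (p.1.1 : F))
        - (p.1.1 - 2 * p.2.1) * p.2.2.1 * p.2.2.2) * h2
    ⟨_, commSwapMatrix_mem_fixSet hdet⟩
  left_inv A := by
    refine Subtype.ext (Units.ext ((eq_commSwapMatrix_of_mem A.2).trans ?_).symm)
    simp [commSwapMatrix]
  right_inv p := by
    refine Prod.ext (Prod.ext (Units.ext ?_) (Units.ext ?_)) rfl <;> simp [commSwapMatrix]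

theorem card_fixSet_swap_one_of_two_ne_zero [Fintype F] (h2 : (2 : F) ≠ 0) :
    Nat.card (fixSet F 3 (swap 0 1) 1) = (Fintype.card F - 1) * Nat.card (GL (Fin 2) F) := by
  rw [Nat.card_congr (fixSetSwapEquivOfTwoNeZero h2), Nat.card_prod, Nat.card_units,
    Nat.card_eq_fintype_card]

theorem card_fixSet_swap_one_of_two_eq_zero [Fintype F] (h2 : (2 : F) = 0) :
    Nat.card (fixSet F 3 (swap 0 1) 1) = (Fintype.card F - 1) ^ 2 * Fintype.card F ^ 3 := by
  rw [Nat.card_congr (fixSetSwapEquivOfTwoEqZero h2)]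
  simp only [Nat.card_prod, Nat.card_units, Nat.card_eq_fintype_card, Fintype.card_prod]
  ring

end Transposition

theorem sum_card_fixSet_three_swap_general {F : Type*} [Field F] [Fintype F] [DecidableEq F]
    (p m q : ℕ) (hp : p.Prime) (hq : q = p ^ m)
    (hcard : Fintype.card F = q) (σ : Equiv.Perm (Fin 3)) (hσ : σ.IsSwap) :
    ∑ t : Fin 3 → Fˣ, Nat.card ↥(fixSet F 3 σ t)
      = if p = 2 then q ^ 3 * (q - 1) ^ 3 else q * (q - 1) ^ 4 * (q + 1) := by
  obtain ⟨x, y, hxy, rfl⟩ := hσ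
  have : Fact p.Prime := ⟨hp⟩
  have : CharP F p := charP_of_card_eq_prime_pow (hcard.trans hq)
  have htwo : (2 : F) = 0 ↔ p = 2 := by
    rw [← Nat.cast_ofNat, CharP.cast_eq_zero_iff F p, Nat.prime_dvd_prime_iff_eq hp Nat.prime_two]
  rw [sum_card_fixSet_eq_of_isConj (Perm.isConj_swap hxy (zero_ne_one (α := Fin 3))),
    sum_card_fixSet_swap, hcard]
  split_ifs with hp2
  · rw [card_fixSet_swap_one_of_two_eq_zero (htwo.2 hp2), hcard]
    ring
  · rw [card_fixSet_swap_one_of_two_ne_zero (mt htwo.1 hp2), card_GL_field, hcard,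
      Fin.prod_univ_two]
    simp only [Fin.val_zero, Fin.val_one, pow_zero, pow_one]
    have hq1 : 1 ≤ q := hcard ▸ Fintype.card_pos
    have hq2 : q ≤ q ^ 2 := Nat.le_self_pow two_ne_zero q
    zify [hq1, hq2, hq1.trans hq2]
    ring

/-- For `n = 3` and `σ` any transposition in `S₃`, the total number of fixed points is
`q³(q−1)³` if `p = 2` and `q(q−1)⁴(q+1)` if `p ≠ 2`. -/
theorem sum_card_fixSet_three_swap {F : Type*} [Field F] [Fintype F] [DecidableEq F]
    (p m q : ℕ) (hp : p.Prime) (hm : 0 < m) (hq : q = p ^ m)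
    (hcard : Fintype.card F = q) (σ : Equiv.Perm (Fin 3)) (hσ : σ.IsSwap) :
    ∑ t : Fin 3 → Fˣ, Nat.card ↥(fixSet F 3 σ t)
      = if p = 2 then q ^ 3 * (q - 1) ^ 3 else q * (q - 1) ^ 4 * (q + 1) :=
  sum_card_fixSet_three_swap_general p m q hp hq hcard σ hσ
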